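/- arXiv:2509.07332 — 3 statements merged into one kernel-verified Lean document; each statement's English description precedes it below -/
import Mathlib

section
/- In the Heisenberg–Virasoro conformal algebra 𝒲(0), the map f₁₁: L ↦ H, H ↦ 0, extended to an 𝔽[∂]-module homomorphism 𝒲(0) → 𝒲(0), is a derivation that is not inner; similarly H ↦ H, L ↦ 0 and L ↦ ∂H, H ↦ 0 are non-inner derivations. Hence dim Der(𝒲(0))/Inder(𝒲(0)) ≥ 3. -/
open Function Finset

/-- A Lie conformal algebra over `F`, presented via its `j`-products
`prod j a b = a_(j) b`, the coefficients of `λ^j/j!` in the `λ`-bracket `[a_λ b]`.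
`D` is the action of `∂`. -/
structure LCA (F : Type) [Field F] [CharZero F]
    (A : Type) [AddCommGroup A] [Module F A] where
  D : A →ₗ[F] A
  prod : ℕ → A →ₗ[F] A →ₗ[F] A
  locality : ∀ a b : A, ∃ N, ∀ n, N ≤ n → prod n a b = 0
  sesq₀ : ∀ a b : A, prod 0 (D a) b = 0
  sesq₁ : ∀ (n : ℕ) (a b : A),
    prod (n+1) (D a) b = (-((n+1 : ℕ) : F)) • prod n a b
  sesq₂₀ : ∀ a b : A, prod 0 a (D b) = D (prod 0 a b)
  sesq₂ : ∀ (n : ℕ) (a b : A),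
    prod (n+1) a (D b) = D (prod (n+1) a b) + ((n+1 : ℕ) : F) • prod n a b
  skew : ∀ (n : ℕ) (a b : A) (N : ℕ), (∀ k, N ≤ k → prod k b a = 0) →
    prod n a b = ∑ j ∈ Finset.range N,
      (((-1 : F) ^ (n + j + 1)) * ((j.factorial : F)⁻¹)) • ((D ^ j) (prod (n+j) b a))
  jacobi : ∀ (m n : ℕ) (a b c : A),
    prod m a (prod n b c) - prod n b (prod m a c)
      = ∑ j ∈ Finset.range (m+1), ((m.choose j : ℕ) : F) • prod (m+n-j) (prod j a b) c

/-- A module over a Lie conformal algebra, via the `j`-actions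
`act j a m = a_(j) m`, the coefficients of `λ^j/j!` in `a_λ m`. -/
structure LCAMod (F : Type) [Field F] [CharZero F]
    (A : Type) [AddCommGroup A] [Module F A]
    (M : Type) [AddCommGroup M] [Module F M] (S : LCA F A) where
  DM : M →ₗ[F] M
  act : ℕ → A →ₗ[F] M →ₗ[F] M
  locality : ∀ (a : A) (m : M), ∃ N, ∀ n, N ≤ n → act n a m = 0
  sesq₀ : ∀ (a : A) (m : M), act 0 (S.D a) m = 0
  sesq₁ : ∀ (n : ℕ) (a : A) (m : M),
    act (n+1) (S.D a) m = (-((n+1 : ℕ) : F)) • act n a m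
  sesq₂₀ : ∀ (a : A) (m : M), act 0 a (DM m) = DM (act 0 a m)
  sesq₂ : ∀ (n : ℕ) (a : A) (m : M),
    act (n+1) a (DM m) = DM (act (n+1) a m) + ((n+1 : ℕ) : F) • act n a m
  jacobi : ∀ (i j : ℕ) (a b : A) (m : M),
    act i a (act j b m) - act j b (act i a m)
      = ∑ k ∈ Finset.range (i+1), ((i.choose k : ℕ) : F) • act (i+j-k) (S.prod k a b) m

section W0

variable {F : Type} [Field F] [CharZero F]
variable {A : Type} [AddCommGroup A] [Module F A]

/-- A derivation of a Lie conformal algebra: an `F[∂]`-module endomorphism `E`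
with `E([a_λ b]) = [a_λ E(b)] + [E(a)_λ b]`. -/
def IsConfDerivation (S : LCA F A) (E : A →ₗ[F] A) : Prop :=
  (∀ x : A, E (S.D x) = S.D (E x)) ∧
  (∀ (n : ℕ) (a b : A), E (S.prod n a b) = S.prod n a (E b) + S.prod n (E a) b)

/-- An inner derivation: `ad a = [a_λ ·]|_{λ=0} = a_(0)·` for some `a`. -/
def IsInnerDerivation (S : LCA F A) (E : A →ₗ[F] A) : Prop :=
  ∃ x : A, ∀ a : A, E a = S.prod 0 x a

end W0

/-! A linear map commuting with `∂` that satisfies the Leibniz rule on a pair `(a, b)` satisfies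
it on every pair `(∂ʲa, ∂ᵏb)`, by sesquilinearity, so an `F[∂]`-module endomorphism of `𝒲(0)` is
a derivation as soon as the Leibniz rule holds on the generators `L`, `H`. There one checks it for
`L ↦ c₁H + c₃∂H`, `H ↦ c₂H` with arbitrary `c₁, c₂, c₃`. In an inner derivation `x_(0)·` the
`∂`-images in `x` act by zero and `H_(0)` kills `L` and `H`, so only the coefficient `r` of `L` in
`x` matters and the map is `L ↦ r∂L`, `H ↦ r∂H`. Comparing coordinates in the basis `∂ᵏL, ∂ᵏH`
forces `c₁ = c₂ = c₃ = 0`. -/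

namespace LCA

variable {F : Type} [Field F] [CharZero F] {A : Type} [AddCommGroup A] [Module F A]

def IsLeibnizPair (S : LCA F A) (E : A →ₗ[F] A) (a b : A) : Prop :=
  ∀ n : ℕ, E (S.prod n a b) = S.prod n a (E b) + S.prod n (E a) b

namespace IsLeibnizPair

variable {S : LCA F A} {E : A →ₗ[F] A} {a b : A}

theorem D_left (hED : ∀ x, E (S.D x) = S.D (E x)) (h : S.IsLeibnizPair E a b) :
    S.IsLeibnizPair E (S.D a) b
  | 0 => by rw [S.sesq₀, map_zero, hED, S.sesq₀, S.sesq₀, add_zero]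
  | n + 1 => by rw [S.sesq₁, map_smul, h n, hED, S.sesq₁, S.sesq₁, smul_add]

theorem D_right (hED : ∀ x, E (S.D x) = S.D (E x)) (h : S.IsLeibnizPair E a b) :
    S.IsLeibnizPair E a (S.D b)
  | 0 => by rw [S.sesq₂₀, hED, h 0, hED, map_add, S.sesq₂₀, S.sesq₂₀]
  | n + 1 => by
    rw [S.sesq₂, map_add, map_smul, hED, h (n + 1), h n, hED, S.sesq₂, S.sesq₂, map_add]
    module

theorem D_pow (hED : ∀ x, E (S.D x) = S.D (E x)) (h : S.IsLeibnizPair E a b) (j k : ℕ) :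
    S.IsLeibnizPair E ((S.D ^ j) a) ((S.D ^ k) b) := by
  induction j with
  | zero =>
    induction k with
    | zero => simpa using h
    | succ k ih => rw [pow_succ', Module.End.mul_apply]; exact ih.D_right hED
  | succ j ih => rw [pow_succ', Module.End.mul_apply]; exact ih.D_left hED

end IsLeibnizPair

section Generators

variable {ι : Type*} {S : LCA F A} {g : ι → A} (bas : Module.Basis (ι × ℕ) F A)

theorem isConfDerivation_of_basis (hbas : ∀ p, bas p = (S.D ^ p.2) (g p.1))
    {E : A →ₗ[F] A} (hED : ∀ x, E (S.D x) = S.D (E x))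
    (h : ∀ i j, S.IsLeibnizPair E (g i) (g j)) : IsConfDerivation S E := by
  refine ⟨hED, fun n a b => ?_⟩
  have : (S.prod n).compr₂ E = (S.prod n).compl₂ E + S.prod n ∘ₗ E :=
    bas.ext fun p => bas.ext fun q => by
      simpa [hbas] using (h p.1 q.1).D_pow hED p.2 q.2 n
  simpa using LinearMap.congr_fun₂ this a b

theorem prod_zero_eq_sum [Fintype ι] (hbas : ∀ p, bas p = (S.D ^ p.2) (g p.1)) (x b : A) :
    S.prod 0 x b = ∑ i, bas.repr x (i, 0) • S.prod 0 (g i) b := by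
  have : (S.prod 0).flip b = ∑ i, (bas.coord (i, 0)).smulRight (S.prod 0 (g i) b) := by
    refine bas.ext fun ⟨i, k⟩ => ?_
    simp only [LinearMap.flip_apply, LinearMap.sum_apply, LinearMap.smulRight_apply,
      Module.Basis.coord_apply, Module.Basis.repr_self]
    cases k with
    | zero => classical simp [hbas, Finsupp.single_apply]
    | succ k => simp [hbas, pow_succ', S.sesq₀]
  simpa using LinearMap.congr_fun this x

variable (S) in
/-- The `F[∂]`-module endomorphism sending `bas (i, k) = ∂ᵏ gᵢ` to `∂ᵏ (v i)`. -/
noncomputable def homOfGenerators : (ι → A) →ₗ[F] A →ₗ[F] A :=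
  (bas.constr F).toLinearMap ∘ₗ LinearMap.pi fun p => (S.D ^ p.2) ∘ₗ LinearMap.proj p.1

theorem homOfGenerators_basis (v : ι → A) (p : ι × ℕ) :
    S.homOfGenerators bas v (bas p) = (S.D ^ p.2) (v p.1) := by
  simp [homOfGenerators]

variable {bas}

theorem homOfGenerators_generator (hbas : ∀ p, bas p = (S.D ^ p.2) (g p.1)) (v : ι → A) (i : ι) :
    S.homOfGenerators bas v (g i) = v i := by
  simpa [hbas] using homOfGenerators_basis bas v (i, 0)

theorem homOfGenerators_D (hbas : ∀ p, bas p = (S.D ^ p.2) (g p.1)) (v : ι → A) (x : A) :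
    S.homOfGenerators bas v (S.D x) = S.D (S.homOfGenerators bas v x) := by
  have : S.homOfGenerators bas v ∘ₗ S.D = S.D ∘ₗ S.homOfGenerators bas v :=
    bas.ext fun ⟨i, k⟩ => by
      have hD : S.D (bas (i, k)) = bas (i, k + 1) := by rw [hbas, hbas, pow_succ']; rfl
      simp only [LinearMap.comp_apply, hD, homOfGenerators_basis, pow_succ', Module.End.mul_apply]
  exact LinearMap.congr_fun this x

end Generators

structure W0Brackets (S : LCA F A) (L H : A) : Prop where
  LL₀ : S.prod 0 L L = S.D L
  LL₁ : S.prod 1 L L = (2 : F) • L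
  LL : ∀ n, S.prod (n + 2) L L = 0
  LH₀ : S.prod 0 L H = S.D H
  LH₁ : S.prod 1 L H = H
  LH : ∀ n, S.prod (n + 2) L H = 0
  HL₀ : S.prod 0 H L = 0
  HL₁ : S.prod 1 H L = H
  HL : ∀ n, S.prod (n + 2) H L = 0
  HH : ∀ n, S.prod n H H = 0

namespace W0Brackets

variable {S : LCA F A} {L H : A} {E : A →ₗ[F] A} {c₁ c₂ c₃ : F}

theorem prod_H_D_H (hW : S.W0Brackets L H) : ∀ n, S.prod n H (S.D H) = 0
  | 0 => by rw [S.sesq₂₀, hW.HH, map_zero]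
  | n + 1 => by rw [S.sesq₂, hW.HH, hW.HH, map_zero, smul_zero, add_zero]

theorem prod_D_H_H (hW : S.W0Brackets L H) : ∀ n, S.prod n (S.D H) H = 0
  | 0 => S.sesq₀ H H
  | n + 1 => by rw [S.sesq₁, hW.HH, smul_zero]

theorem apply_prod_L_H (hW : S.W0Brackets L H) (hED : ∀ x, E (S.D x) = S.D (E x))
    (hEH : E H = c₂ • H) : ∀ n, E (S.prod n L H) = c₂ • S.prod n L H
  | 0 => by rw [hW.LH₀, hED, hEH, map_smul]
  | 1 => by rw [hW.LH₁, hEH]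
  | n + 2 => by rw [hW.LH, map_zero, smul_zero]

theorem apply_prod_H_L (hW : S.W0Brackets L H) (hEH : E H = c₂ • H) :
    ∀ n, E (S.prod n H L) = c₂ • S.prod n H L
  | 0 => by rw [hW.HL₀, map_zero, smul_zero]
  | 1 => by rw [hW.HL₁, hEH]
  | n + 2 => by rw [hW.HL, map_zero, smul_zero]

theorem isLeibnizPair_L_L (hW : S.W0Brackets L H) (hED : ∀ x, E (S.D x) = S.D (E x))
    (hEL : E L = c₁ • H + c₃ • S.D H) : S.IsLeibnizPair E L L
  | 0 => by
    simp only [hW.LL₀, hED, hEL, map_add, map_smul, LinearMap.add_apply, LinearMap.smul_apply,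
      S.sesq₂₀, S.sesq₀, hW.LH₀, hW.HL₀, smul_zero, add_zero]
  | 1 => by
    simp only [hW.LL₁, hEL, map_add, map_smul, LinearMap.add_apply, LinearMap.smul_apply]
    rw [S.sesq₂ 0, S.sesq₁ 0, hW.LH₁, hW.LH₀, hW.HL₀, hW.HL₁]
    push_cast
    module
  | 2 => by
    simp only [hW.LL, hEL, map_add, map_smul, LinearMap.add_apply, LinearMap.smul_apply]
    rw [S.sesq₂ 1, S.sesq₁ 1, hW.LH 0, hW.LH₁, hW.HL 0, hW.HL₁, map_zero, map_zero]
    push_cast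
    module
  | n + 3 => by
    simp only [hW.LL, hEL, map_add, map_smul, LinearMap.add_apply, LinearMap.smul_apply]
    rw [S.sesq₂ (n + 2), S.sesq₁ (n + 2), hW.LH, hW.LH, hW.HL, hW.HL]
    simp

theorem isLeibnizPair_L_H (hW : S.W0Brackets L H) (hED : ∀ x, E (S.D x) = S.D (E x))
    (hEL : E L = c₁ • H + c₃ • S.D H) (hEH : E H = c₂ • H) : S.IsLeibnizPair E L H := fun n => by
  simp only [hW.apply_prod_L_H hED hEH, hEL, hEH, map_add, map_smul, LinearMap.add_apply,
    LinearMap.smul_apply, hW.HH, hW.prod_D_H_H, smul_zero, add_zero]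

theorem isLeibnizPair_H_L (hW : S.W0Brackets L H) (hEL : E L = c₁ • H + c₃ • S.D H)
    (hEH : E H = c₂ • H) : S.IsLeibnizPair E H L := fun n => by
  simp only [hW.apply_prod_H_L hEH, hEL, hEH, map_add, map_smul, LinearMap.smul_apply,
    hW.HH, hW.prod_H_D_H, smul_zero, zero_add]

theorem isLeibnizPair_H_H (hW : S.W0Brackets L H) (hEH : E H = c₂ • H) :
    S.IsLeibnizPair E H H := fun n => by
  simp only [hEH, map_smul, LinearMap.smul_apply, hW.HH, map_zero, smul_zero, add_zero]

theorem isConfDerivation (hW : S.W0Brackets L H) (bas : Module.Basis (Fin 2 × ℕ) F A)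
    (hbas : ∀ p, bas p = (S.D ^ p.2) (![L, H] p.1)) (hED : ∀ x, E (S.D x) = S.D (E x))
    (hEL : E L = c₁ • H + c₃ • S.D H) (hEH : E H = c₂ • H) : IsConfDerivation S E := by
  refine isConfDerivation_of_basis bas hbas hED fun i j => ?_
  fin_cases i <;> fin_cases j
  · exact hW.isLeibnizPair_L_L hED hEL
  · exact hW.isLeibnizPair_L_H hED hEL hEH
  · exact hW.isLeibnizPair_H_L hEL hEH
  · exact hW.isLeibnizPair_H_H hEH

theorem eq_zero_of_isInnerDerivation (hW : S.W0Brackets L H)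
    (bas : Module.Basis (Fin 2 × ℕ) F A)
    (hbas : ∀ p, bas p = (S.D ^ p.2) (![L, H] p.1)) (hEL : E L = c₁ • H + c₃ • S.D H)
    (hEH : E H = c₂ • H) (hE : IsInnerDerivation S E) : c₁ = 0 ∧ c₂ = 0 ∧ c₃ = 0 := by
  obtain ⟨x, hx⟩ := hE
  have hx₀ : ∀ b, S.prod 0 x b =
      bas.repr x (0, 0) • S.prod 0 L b + bas.repr x (1, 0) • S.prod 0 H b := by
    intro b
    rw [prod_zero_eq_sum bas hbas, Fin.sum_univ_two]
    rfl
  have hcL : c₁ • bas (1, 0) + c₃ • bas (1, 1) + (-bas.repr x (0, 0)) • bas (0, 1) = 0 := by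
    have hb : bas (1, 0) = H ∧ bas (1, 1) = S.D H ∧ bas (0, 1) = S.D L := by simp [hbas]
    rw [hb.1, hb.2.1, hb.2.2, ← hEL, hx, hx₀, hW.LL₀, hW.HL₀]
    module
  have hind := Fintype.linearIndependent_iff.mp
    (bas.linearIndependent.comp ![(1, 0), (1, 1), (0, 1)] (by decide))
    ![c₁, c₃, -bas.repr x (0, 0)] (by simpa [Fin.sum_univ_three] using hcL)
  obtain ⟨hc₁, hc₃, hr⟩ : c₁ = 0 ∧ c₃ = 0 ∧ bas.repr x (0, 0) = 0 :=
    ⟨hind 0, hind 1, by simpa using hind 2⟩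
  have hH : H ≠ 0 := by simpa [hbas] using bas.ne_zero (1, 0)
  have : c₂ • H = 0 := by rw [← hEH, hx, hx₀, hr, hW.HH, zero_smul, smul_zero, add_zero]
  exact ⟨hc₁, (smul_eq_zero.mp this).resolve_right hH, hc₃⟩

end W0Brackets

end LCA

/-- **Non-inner derivations of the Heisenberg–Virasoro conformal algebra
`𝒲(0)`.**  The `F[∂]`-module maps `f₁₁ : L ↦ H, H ↦ 0`, `f₁₂ : H ↦ H, L ↦ 0`
and `f₁₃ : L ↦ ∂H, H ↦ 0` are derivations of `𝒲(0)` which are not inner, and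
no nontrivial linear combination of them is inner; hence
`dim Der(𝒲(0))/Inder(𝒲(0)) ≥ 3`. -/
theorem W0_noninner_derivations
    (F : Type) [Field F] [CharZero F]
    (A : Type) [AddCommGroup A] [Module F A]
    (S : LCA F A) (L H : A)
    -- {L, H} is an F[∂]-basis of 𝒲(0)
    (bas : Module.Basis (Fin 2 × ℕ) F A)
    (hbas : ∀ k : ℕ, bas (0, k) = (S.D ^ k) L ∧ bas (1, k) = (S.D ^ k) H)
    -- λ-brackets of 𝒲(0)
    (hLL0 : S.prod 0 L L = S.D L) (hLL1 : S.prod 1 L L = (2 : F) • L)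
    (hLLn : ∀ n : ℕ, 2 ≤ n → S.prod n L L = 0)
    (hLH0 : S.prod 0 L H = S.D H) (hLH1 : S.prod 1 L H = H)
    (hLHn : ∀ n : ℕ, 2 ≤ n → S.prod n L H = 0)
    (hHL0 : S.prod 0 H L = 0) (hHL1 : S.prod 1 H L = H)
    (hHLn : ∀ n : ℕ, 2 ≤ n → S.prod n H L = 0)
    (hHH : ∀ n : ℕ, S.prod n H H = 0) :
    ∀ (f11 f12 f13 : A →ₗ[F] A),
      f11 = bas.constr F (fun p => if p.1 = 0 then (S.D ^ p.2) H else 0) →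
      f12 = bas.constr F (fun p => if p.1 = 0 then 0 else (S.D ^ p.2) H) →
      f13 = bas.constr F (fun p => if p.1 = 0 then (S.D ^ (p.2 + 1)) H else 0) →
      (IsConfDerivation S f11 ∧ ¬ IsInnerDerivation S f11) ∧
      (IsConfDerivation S f12 ∧ ¬ IsInnerDerivation S f12) ∧
      (IsConfDerivation S f13 ∧ ¬ IsInnerDerivation S f13) ∧
      (∀ c1 c2 c3 : F,
        IsInnerDerivation S (c1 • f11 + c2 • f12 + c3 • f13) →
          c1 = 0 ∧ c2 = 0 ∧ c3 = 0) := by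
  intro f11 f12 f13 h11 h12 h13
  have hW : S.W0Brackets L H := ⟨hLL0, hLL1, fun n => hLLn _ (by omega), hLH0, hLH1,
    fun n => hLHn _ (by omega), hHL0, hHL1, fun n => hHLn _ (by omega), hHH⟩
  have hg : ∀ p, bas p = (S.D ^ p.2) (![L, H] p.1) := fun ⟨i, k⟩ => by
    fin_cases i <;> simp [hbas]
  have hf : ∀ c₁ c₂ c₃ : F, c₁ • f11 + c₂ • f12 + c₃ • f13 =
      S.homOfGenerators bas ![c₁ • H + c₃ • S.D H, c₂ • H] := fun c₁ c₂ c₃ => by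
    subst h11 h12 h13
    refine bas.ext fun ⟨i, k⟩ => ?_
    fin_cases i <;> simp [LCA.homOfGenerators_basis, pow_succ]
  have hL : ∀ c₁ c₂ c₃ : F, S.homOfGenerators bas ![c₁ • H + c₃ • S.D H, c₂ • H] L =
      c₁ • H + c₃ • S.D H := fun _ _ _ => LCA.homOfGenerators_generator hg _ 0
  have hH : ∀ c₁ c₂ c₃ : F, S.homOfGenerators bas ![c₁ • H + c₃ • S.D H, c₂ • H] H =
      c₂ • H := fun _ _ _ => LCA.homOfGenerators_generator hg _ 1
  have hder : ∀ c₁ c₂ c₃ : F, IsConfDerivation S (c₁ • f11 + c₂ • f12 + c₃ • f13) :=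
    fun c₁ c₂ c₃ => hf c₁ c₂ c₃ ▸ hW.isConfDerivation bas hg (LCA.homOfGenerators_D hg _)
      (hL c₁ c₂ c₃) (hH c₁ c₂ c₃)
  have hout : ∀ c₁ c₂ c₃ : F, IsInnerDerivation S (c₁ • f11 + c₂ • f12 + c₃ • f13) →
      c₁ = 0 ∧ c₂ = 0 ∧ c₃ = 0 :=
    fun c₁ c₂ c₃ h => hW.eq_zero_of_isInnerDerivation bas hg (hL c₁ c₂ c₃) (hH c₁ c₂ c₃)
      (hf c₁ c₂ c₃ ▸ h)
  have e₁ : f11 = (1 : F) • f11 + (0 : F) • f12 + (0 : F) • f13 := by simp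
  have e₂ : f12 = (0 : F) • f11 + (1 : F) • f12 + (0 : F) • f13 := by simp
  have e₃ : f13 = (0 : F) • f11 + (0 : F) • f12 + (1 : F) • f13 := by simp
  refine ⟨⟨e₁ ▸ hder 1 0 0, fun h => one_ne_zero (hout 1 0 0 (e₁ ▸ h)).1⟩,
    ⟨e₂ ▸ hder 0 1 0, fun h => one_ne_zero (hout 0 1 0 (e₂ ▸ h)).2.1⟩,
    ⟨e₃ ▸ hder 0 0 1, fun h => one_ne_zero (hout 0 0 1 (e₃ ▸ h)).2.2⟩, hout⟩
end

section
/- In the Heisenberg–Virasoro conformal algebra 𝒲(0), the space of Casimir elements Cas(𝒲(0), 𝒲(0)) = {∫a ∈ 𝒲(0)/∂𝒲(0) : [a_λ 𝒲(0)]|_{λ=0} = 0} is one-dimensional, spanned by ∫H (the image of H in 𝒲(0)/∂𝒲(0)). -/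
open Function Finset

/-! `𝒲(0)` has the `F`-basis `∂ᵏL, ∂ᵏH`, on which `∂` acts as the shift `k ↦ k + 1`. Modulo `∂𝒲(0)`
every element is therefore a combination of `L` and `H`, and the coefficient of `H` never lies in
`∂𝒲(0)`. Since `∂` commutes with `H_(0)` and `H_(0)` kills `L` and `H`, `∫H` is Casimir; conversely
`(αL + βH + ∂y)_(0) L = α ∂L`, so a Casimir element has no `L`-component. -/

namespace Module.Basis

section ShiftBasis

variable {R A M ι : Type*} [Ring R] [AddCommGroup A] [Module R A] [AddCommGroup M] [Module R M]
  (b : Basis (ι × ℕ) R A) {D : A →ₗ[R] A} (hD : ∀ i k, D (b (i, k)) = b (i, k + 1))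
include hD

theorem eq_zero_of_intertwines_shift {f : A →ₗ[R] M} {D' : M →ₗ[R] M} (hf : ∀ x, f (D x) = D' (f x))
    (h₀ : ∀ i, f (b (i, 0)) = 0) : f = 0 := by
  refine b.ext fun ⟨i, k⟩ => ?_
  rw [LinearMap.zero_apply]
  induction k with
  | zero => exact h₀ i
  | succ k ih => rw [← hD, hf, ih, map_zero]

theorem coord_zero_apply_shift (i : ι) (y : A) : b.coord (i, 0) (D y) = 0 := by
  suffices b.coord (i, 0) ∘ₗ D = 0 from LinearMap.congr_fun this y
  refine b.ext fun ⟨j, k⟩ => ?_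
  simp [hD]

theorem exists_eq_sum_add_shift [Fintype ι] (x : A) :
    ∃ y, x = ∑ i, b.coord (i, 0) x • b (i, 0) + D y := by
  classical
  set P : A →ₗ[R] A := LinearMap.id - ∑ i, (b.coord (i, 0)).smulRight (b (i, 0))
  have hP : LinearMap.range P ≤ LinearMap.range D := by
    rw [LinearMap.range_eq_map, ← b.span_eq, Submodule.map_span_le]
    rintro _ ⟨⟨i, k⟩, rfl⟩
    cases k with
    | zero => exact ⟨0, by simp [P, Finsupp.single_apply]⟩
    | succ k => exact ⟨b (i, k), by simp [P, hD]⟩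
  obtain ⟨y, hy⟩ := hP ⟨x, rfl⟩
  refine ⟨y, ?_⟩
  rw [hy]
  simp [P]

end ShiftBasis

end Module.Basis

theorem W0_casimir_elements_general
    (F : Type) [Field F] [CharZero F]
    (A : Type) [AddCommGroup A] [Module F A]
    (S : LCA F A) (L H : A)
    -- {L, H} is an F[∂]-basis of 𝒲(0)
    (bas : Module.Basis (Fin 2 × ℕ) F A)
    (hbas : ∀ k : ℕ, bas (0, k) = (S.D ^ k) L ∧ bas (1, k) = (S.D ^ k) H)
    -- λ-brackets of 𝒲(0)
    (hLL0 : S.prod 0 L L = S.D L)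
    (hHL0 : S.prod 0 H L = 0)
    (hHH : ∀ n : ℕ, S.prod n H H = 0) :
    (∀ x : A, S.prod 0 H x = 0) ∧
    (¬ ∃ y : A, H = S.D y) ∧
    (∀ a : A, (∀ x : A, S.prod 0 a x = 0) →
      ∃ (c : F) (y : A), a = c • H + S.D y) := by
  have hL : bas (0, 0) = L := by simpa using (hbas 0).1
  have hH : bas (1, 0) = H := by simpa using (hbas 0).2
  have hD : ∀ i k, S.D (bas (i, k)) = bas (i, k + 1) := by
    intro i k
    fin_cases i <;> simp [hbas, pow_succ']
  refine ⟨fun x => ?_, ?_, fun a ha => ?_⟩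
  · have hH₀ : S.prod 0 H = 0 := bas.eq_zero_of_intertwines_shift hD (S.sesq₂₀ H)
      (Fin.forall_fin_two.2 ⟨hL ▸ hHL0, hH ▸ hHH 0⟩)
    rw [hH₀, LinearMap.zero_apply]
  · rintro ⟨y, hy⟩
    simpa [← hy, ← hH] using bas.coord_zero_apply_shift hD 1 y
  · obtain ⟨y, hy⟩ := bas.exists_eq_sum_add_shift hD a
    rw [Fin.sum_univ_two, hL, hH] at hy
    generalize bas.coord (0, 0) a = α, bas.coord (1, 0) a = β at hy
    have hα : α • S.D L = 0 := by
      simpa [hy, hLL0, hHL0, S.sesq₀] using ha L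
    have hDL : S.D L ≠ 0 := hL ▸ hD 0 0 ▸ bas.ne_zero _
    exact ⟨β, y, by rw [hy, (smul_eq_zero.1 hα).resolve_right hDL, zero_smul, zero_add]⟩

/-- **Casimir elements of the Heisenberg–Virasoro conformal algebra `𝒲(0)`.**
The space `Cas(𝒲(0),𝒲(0)) = {∫a : [a_λ 𝒲(0)]|_{λ=0} = 0}` is one-dimensional,
spanned by `∫H`: the element `H` is Casimir, its class mod `∂𝒲(0)` is nonzero,
and every Casimir element is of the form `c·H + ∂y`. -/
theorem W0_casimir_elements
    (F : Type) [Field F] [CharZero F]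
    (A : Type) [AddCommGroup A] [Module F A]
    (S : LCA F A) (L H : A)
    -- {L, H} is an F[∂]-basis of 𝒲(0)
    (bas : Module.Basis (Fin 2 × ℕ) F A)
    (hbas : ∀ k : ℕ, bas (0, k) = (S.D ^ k) L ∧ bas (1, k) = (S.D ^ k) H)
    -- λ-brackets of 𝒲(0)
    (hLL0 : S.prod 0 L L = S.D L) (hLL1 : S.prod 1 L L = (2 : F) • L)
    (hLLn : ∀ n : ℕ, 2 ≤ n → S.prod n L L = 0)
    (hLH0 : S.prod 0 L H = S.D H) (hLH1 : S.prod 1 L H = H)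
    (hLHn : ∀ n : ℕ, 2 ≤ n → S.prod n L H = 0)
    (hHL0 : S.prod 0 H L = 0) (hHL1 : S.prod 1 H L = H)
    (hHLn : ∀ n : ℕ, 2 ≤ n → S.prod n H L = 0)
    (hHH : ∀ n : ℕ, S.prod n H H = 0) :
    (∀ x : A, S.prod 0 H x = 0) ∧
    (¬ ∃ y : A, H = S.D y) ∧
    (∀ a : A, (∀ x : A, S.prod 0 a x = 0) →
      ∃ (c : F) (y : A), a = c • H + S.D y) :=
  W0_casimir_elements_general F A S L H bas hbas hLL0 hHL0 hHH
end

section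
/- In the Schrödinger–Virasoro conformal algebra 𝒮𝒱, every Casimir element is a scalar multiple of ∫M, and the 𝔽[∂]-module map f₁₁: L ↦ M, M ↦ 0, Y ↦ 0 is a derivation of 𝒮𝒱 that is not inner. -/
/-!
`M_(0)` commutes with `∂` and kills `L, M, Y`, hence kills `𝒮𝒱`. Since `𝒮𝒱` is free over
`F[∂]` on `L, M, Y` and `(∂a)_(0) = 0`, the map `a ↦ a_(0) L` only sees `a` modulo `∂𝒮𝒱`,
i.e. `a ≡ c_L L + c_M M + c_Y Y`, and then `a_(0) L = c_L ∂L + (c_Y/2) ∂Y`. This vanishes only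
for `c_L = c_Y = 0`, which gives the Casimirs, and it is never `M = f₁₁ L`, so `f₁₁` is not
inner. By sesquilinearity the Leibniz rule propagates from pairs of generators along `∂` in
either slot, so `f₁₁` is a derivation once it is checked on the nine pairs of generators.
-/

open Function Finset

namespace Module.Basis

variable {R A B ι : Type*} [CommSemiring R] [AddCommMonoid A] [Module R A]
  [AddCommMonoid B] [Module R B] {D : A →ₗ[R] A} {g : ι → A} {bas : Basis (ι × ℕ) R A}

theorem apply_succ_of_eq_pow_apply (hbas : ∀ i k, bas (i, k) = (D ^ k) (g i)) (i : ι) (k : ℕ) :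
    bas (i, k + 1) = D (bas (i, k)) := by
  rw [hbas, hbas, pow_succ', Module.End.mul_apply]

theorem ext_of_comp_eq_comp (hbas : ∀ i k, bas (i, k) = (D ^ k) (g i)) {D' : B →ₗ[R] B}
    {f f' : A →ₗ[R] B} (hf : f ∘ₗ D = D' ∘ₗ f) (hf' : f' ∘ₗ D = D' ∘ₗ f')
    (h : ∀ i, f (g i) = f' (g i)) : f = f' := by
  refine bas.ext fun ⟨i, k⟩ => ?_
  induction k with
  | zero => simpa [hbas] using h i
  | succ k ih =>
    rw [apply_succ_of_eq_pow_apply hbas, ← LinearMap.comp_apply, hf, ← LinearMap.comp_apply, hf',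
      LinearMap.comp_apply, LinearMap.comp_apply, ih]

theorem constr_comp_of_apply_succ (hbas : ∀ i k, bas (i, k) = (D ^ k) (g i)) {D' : B →ₗ[R] B}
    {v : ι × ℕ → B} (hv : ∀ i k, v (i, k + 1) = D' (v (i, k))) :
    bas.constr R v ∘ₗ D = D' ∘ₗ bas.constr R v :=
  bas.ext fun ⟨i, k⟩ => by
    simp only [LinearMap.comp_apply, ← apply_succ_of_eq_pow_apply hbas, constr_basis, hv]

theorem span_range_sup_range_eq_top (hbas : ∀ i k, bas (i, k) = (D ^ k) (g i)) :
    Submodule.span R (Set.range g) ⊔ LinearMap.range D = ⊤ := by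
  refine eq_top_iff.mpr (bas.span_eq ▸ Submodule.span_le.mpr ?_)
  rintro _ ⟨⟨i, k⟩, rfl⟩
  cases k with
  | zero => exact Submodule.mem_sup_left (Submodule.subset_span ⟨i, by simp [hbas]⟩)
  | succ k =>
    rw [apply_succ_of_eq_pow_apply hbas]
    exact Submodule.mem_sup_right (LinearMap.mem_range_self D _)

theorem exists_eq_sum_smul_add [Fintype ι] (hbas : ∀ i k, bas (i, k) = (D ^ k) (g i)) (x : A) :
    ∃ (c : ι → R) (y : A), x = ∑ i, c i • g i + D y := by
  obtain ⟨u, hu, _, ⟨y, rfl⟩, rfl⟩ :=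
    Submodule.mem_sup.mp ((span_range_sup_range_eq_top hbas).symm ▸ Submodule.mem_top (x := x))
  obtain ⟨c, rfl⟩ := (Submodule.mem_span_range_iff_exists_fun R).mp hu
  exact ⟨c, y, rfl⟩

end Module.Basis

namespace LCA

variable {F A ι : Type} [Field F] [CharZero F] [AddCommGroup A] [Module F A]
  (S : LCA F A) {E : A →ₗ[F] A}

def LeibnizAt (E : A →ₗ[F] A) (a b : A) : Prop :=
  ∀ n, E (S.prod n a b) = S.prod n a (E b) + S.prod n (E a) b

variable {S}

theorem LeibnizAt.D_left (hE : ∀ x, E (S.D x) = S.D (E x)) {a b : A} (h : S.LeibnizAt E a b) :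
    S.LeibnizAt E (S.D a) b := by
  rintro (_ | n)
  · simp [hE, S.sesq₀]
  · simp only [hE, S.sesq₁, map_smul, h n, smul_add]

theorem LeibnizAt.D_right (hE : ∀ x, E (S.D x) = S.D (E x)) {a b : A} (h : S.LeibnizAt E a b) :
    S.LeibnizAt E a (S.D b) := by
  rintro (_ | n)
  · simp only [hE, S.sesq₂₀, h 0, map_add]
  · simp only [hE, S.sesq₂, map_add, map_smul, h n, h (n + 1), smul_add]
    abel

theorem LeibnizAt.pow_D (hE : ∀ x, E (S.D x) = S.D (E x)) {a b : A} (h : S.LeibnizAt E a b)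
    (j k : ℕ) : S.LeibnizAt E ((S.D ^ j) a) ((S.D ^ k) b) := by
  induction j with
  | zero =>
    induction k with
    | zero => simpa using h
    | succ k ih => simpa only [pow_succ', Module.End.mul_apply] using ih.D_right hE
  | succ j ih => simpa only [pow_succ', Module.End.mul_apply] using ih.D_left hE

theorem isConfDerivation_of_leibnizAt {g : ι → A} {bas : Module.Basis (ι × ℕ) F A}
    (hbas : ∀ i k, bas (i, k) = (S.D ^ k) (g i)) (hE : ∀ x, E (S.D x) = S.D (E x))
    (hg : ∀ i j, S.LeibnizAt E (g i) (g j)) : IsConfDerivation S E := by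
  refine ⟨hE, fun n a b => ?_⟩
  have h : (S.prod n).compr₂ E = (S.prod n).compl₂ E + (S.prod n).comp E :=
    bas.ext fun ⟨i, j⟩ => bas.ext fun ⟨i', k⟩ => by
      simpa [hbas] using (hg i i').pow_D hE j k n
  simpa using LinearMap.congr_fun (LinearMap.congr_fun h a) b

end LCA

/-- **Casimirs and a non-inner derivation of the Schrödinger–Virasoro conformal
algebra `𝒮𝒱`.**  In `𝒮𝒱 = F[∂]L ⊕ F[∂]M ⊕ F[∂]Y`, every Casimir element is a
scalar multiple of `∫M` (i.e. `M` is Casimir and every Casimir is `c·M + ∂y`),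
and the `F[∂]`-module map `f₁₁ : L ↦ M, M ↦ 0, Y ↦ 0` is a derivation of `𝒮𝒱`
which is not inner. -/
theorem SV_casimir_and_noninner_derivation
    (F : Type) [Field F] [CharZero F]
    (A : Type) [AddCommGroup A] [Module F A]
    (S : LCA F A) (L Mel Y : A)
    -- {L, M, Y} is an F[∂]-basis of 𝒮𝒱
    (bas : Module.Basis (Fin 3 × ℕ) F A)
    (hbas : ∀ k : ℕ, bas (0, k) = (S.D ^ k) L ∧ bas (1, k) = (S.D ^ k) Mel ∧
      bas (2, k) = (S.D ^ k) Y)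
    -- nonzero λ-brackets of 𝒮𝒱
    (hLL0 : S.prod 0 L L = S.D L) (hLL1 : S.prod 1 L L = (2 : F) • L)
    (hLLn : ∀ n : ℕ, 2 ≤ n → S.prod n L L = 0)
    (hLM0 : S.prod 0 L Mel = S.D Mel) (hLM1 : S.prod 1 L Mel = Mel)
    (hLMn : ∀ n : ℕ, 2 ≤ n → S.prod n L Mel = 0)
    (hLY0 : S.prod 0 L Y = S.D Y) (hLY1 : S.prod 1 L Y = ((3 : F)/2) • Y)
    (hLYn : ∀ n : ℕ, 2 ≤ n → S.prod n L Y = 0)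
    (hML0 : S.prod 0 Mel L = 0) (hML1 : S.prod 1 Mel L = Mel)
    (hMLn : ∀ n : ℕ, 2 ≤ n → S.prod n Mel L = 0)
    (hYL0 : S.prod 0 Y L = ((1 : F)/2) • S.D Y) (hYL1 : S.prod 1 Y L = ((3 : F)/2) • Y)
    (hYLn : ∀ n : ℕ, 2 ≤ n → S.prod n Y L = 0)
    (hYY0 : S.prod 0 Y Y = S.D Mel) (hYY1 : S.prod 1 Y Y = (2 : F) • Mel)
    (hYYn : ∀ n : ℕ, 2 ≤ n → S.prod n Y Y = 0)
    -- all other brackets of basis elements vanish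
    (hMM : ∀ n : ℕ, S.prod n Mel Mel = 0)
    (hMY : ∀ n : ℕ, S.prod n Mel Y = 0)
    (hYM : ∀ n : ℕ, S.prod n Y Mel = 0) :
    (∀ x : A, S.prod 0 Mel x = 0) ∧
    (∀ a : A, (∀ x : A, S.prod 0 a x = 0) →
      ∃ (c : F) (y : A), a = c • Mel + S.D y) ∧
    (∀ f11 : A →ₗ[F] A,
      f11 = bas.constr F (fun p => if p.1 = 0 then (S.D ^ p.2) Mel else 0) →
      IsConfDerivation S f11 ∧ ¬ IsInnerDerivation S f11) := by
  set g : Fin 3 → A := ![L, Mel, Y]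
  have hg : ∀ i k, bas (i, k) = (S.D ^ k) (g i) := by
    intro i k; fin_cases i <;> simp [g, hbas k]
  have hprodL : ∀ (c : Fin 3 → F) (y : A),
      S.prod 0 (∑ i, c i • g i + S.D y) L = c 0 • bas (0, 1) + (c 2 / 2) • bas (2, 1) := by
    intro c y
    simp [Fin.sum_univ_three, S.sesq₀, g, hLL0, hML0, hYL0, smul_smul, div_eq_mul_inv, (hbas 1).1,
      (hbas 1).2.2]
  refine ⟨fun x => ?casimirM, fun a ha => ?casimirs, fun f11 hf11 => ?derivation⟩
  case casimirM =>
    have hMel : S.prod 0 Mel = 0 := Module.Basis.ext_of_comp_eq_comp hg (D' := S.D)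
      (LinearMap.ext (S.sesq₂₀ Mel)) (by simp) (fun i => by fin_cases i <;> simp [g, hML0, hMM, hMY])
    simp [hMel]
  case casimirs =>
    obtain ⟨c, y, rfl⟩ := bas.exists_eq_sum_smul_add hg a
    have h0 := hprodL c y ▸ ha L
    have hc0 : c 0 = 0 := by simpa using congrArg (bas.repr · (0, 1)) h0
    have hc2 : c 2 = 0 := by simpa using congrArg (bas.repr · (2, 1)) h0
    exact ⟨c 1, y, by simp [Fin.sum_univ_three, hc0, hc2, g]⟩
  case derivation =>
    have hv : ∀ (i : Fin 3) k, (if i = 0 then (S.D ^ (k + 1)) Mel else 0)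
        = S.D (if i = 0 then (S.D ^ k) Mel else 0) := by
      intro i k; split_ifs <;> simp [pow_succ']
    have hD : ∀ x, f11 (S.D x) = S.D (f11 x) :=
      LinearMap.congr_fun (hf11 ▸ Module.Basis.constr_comp_of_apply_succ hg hv)
    have hf : ∀ p, f11 (bas p) = if p.1 = 0 then (S.D ^ p.2) Mel else 0 :=
      fun p => hf11 ▸ bas.constr_basis F _ p
    have hfL : f11 L = Mel := by simpa [hbas 0] using hf (0, 0)
    have hfM : f11 Mel = 0 := by simpa [hbas 0] using hf (1, 0)
    have hfY : f11 Y = 0 := by simpa [hbas 0] using hf (2, 0)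
    refine ⟨LCA.isConfDerivation_of_leibnizAt hg hD fun i j n => ?_, fun ⟨x, hx⟩ => ?_⟩
    · fin_cases i <;> fin_cases j <;> rcases n with _ | _ | n <;>
        simp [g, hD, hfL, hfM, hfY, hLL0, hLL1, hLLn, hLM0, hLM1, hLMn, hLY0, hLY1, hLYn,
          hML0, hML1, hMLn, hYL0, hYL1, hYLn, hYY0, hYY1, hYYn, hMM, hMY, hYM, two_smul]
    · obtain ⟨c, y, rfl⟩ := bas.exists_eq_sum_smul_add hg x
      have h : bas (1, 0) = c 0 • bas (0, 1) + (c 2 / 2) • bas (2, 1) := by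
        rw [show bas (1, 0) = Mel by simp [hbas 0], ← hfL, hx, hprodL]
      simpa using congrArg (bas.repr · (1, 0)) h
end
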